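/- arXiv:2404.06158 — 10 statements merged into one kernel-verified Lean document; each statement's English description precedes it below -/
import Mathlib

section
/- Let A ∈ ℝ^{n×n}, B ∈ ℝ^{n×m}, C ∈ ℝ^{p×n}, E ∈ ℝ^{n×r}, and let A_U ∈ ℝ^{n×n}, B_u ∈ ℝ^{n×m}, B_y ∈ ℝ^{n×p}, D ∈ ℝ^{n×p} satisfy (I_n − D·C)·A − A_U·(I_n − D·C) = B_y·C, B_u = (I_n − D·C)·B and (I_n − D·C)·E = 0. Suppose the sequences x, z : ℕ → ℝ^n, u, f : ℕ → ℝ^m, d : ℕ → ℝ^r, y : ℕ → ℝ^p satisfy for all k: x(k+1) = A·x(k) + B·u(k) + E·d(k) + B·f(k), y(k) = C·x(k), z(k+1) = A_U·z(k) + B_u·u(k) + B_y·y(k), and set e(k) = x(k) − (z(k) + D·y(k)). Then for all k: e(k+1) = A_U·e(k) + B_u·f(k). -/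
open Matrix

/-- Under the UIO constraint equations the estimation error satisfies
e(k+1) = A_U e(k) + B_u f(k). -/
theorem stmt_2 {n m p r : ℕ}
    (A : Matrix (Fin n) (Fin n) ℝ) (B : Matrix (Fin n) (Fin m) ℝ)
    (C : Matrix (Fin p) (Fin n) ℝ) (E : Matrix (Fin n) (Fin r) ℝ)
    (A_U : Matrix (Fin n) (Fin n) ℝ) (B_u : Matrix (Fin n) (Fin m) ℝ)
    (B_y : Matrix (Fin n) (Fin p) ℝ) (D : Matrix (Fin n) (Fin p) ℝ)
    (hc1 : (1 - D * C) * A - A_U * (1 - D * C) = B_y * C)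
    (hc2 : B_u = (1 - D * C) * B)
    (hc3 : (1 - D * C) * E = 0)
    (x z : ℕ → Fin n → ℝ) (u f : ℕ → Fin m → ℝ) (d : ℕ → Fin r → ℝ)
    (y : ℕ → Fin p → ℝ)
    (hx : ∀ k, x (k + 1) =
      A.mulVec (x k) + B.mulVec (u k) + E.mulVec (d k) + B.mulVec (f k))
    (hy : ∀ k, y k = C.mulVec (x k))
    (hz : ∀ k, z (k + 1) =
      A_U.mulVec (z k) + B_u.mulVec (u k) + B_y.mulVec (y k))
    (e : ℕ → Fin n → ℝ)
    (he : ∀ k, e k = x k - (z k + D.mulVec (y k))) :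
    ∀ k, e (k + 1) = A_U.mulVec (e k) + B_u.mulVec (f k) := by
  intro k
  have hTA : (1 - D * C) * A = B_y * C + A_U * (1 - D * C) :=
    sub_eq_iff_eq_add.mp hc1
  have hek : ∀ j, e j = ((1 : Matrix (Fin n) (Fin n) ℝ) - D * C).mulVec (x j) - z j := by
    intro j
    rw [he, hy, sub_mulVec, one_mulVec, ← mulVec_mulVec]
    abel
  rw [hek (k + 1), hek k, hx, hz, hy, hc2]
  simp only [mulVec_add, mulVec_sub, mulVec_mulVec, hTA, hc3, add_mulVec, zero_mulVec]
  abel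
end

section
/- Let A ∈ ℝ^{n×n}, B ∈ ℝ^{n×m}, C ∈ ℝ^{p×n}, E ∈ ℝ^{n×r}, and let A_U ∈ ℝ^{n×n}, B_u ∈ ℝ^{n×m}, B_y ∈ ℝ^{n×p}, D ∈ ℝ^{n×p} satisfy the UIO constraint equations (i.e. (I_n − D·C)·A − A_U·(I_n − D·C) = B_y·C, B_u = (I_n − D·C)·B, (I_n − D·C)·E = 0, and A_U nilpotent). Suppose the sequences x, z : ℕ → ℝ^n, u : ℕ → ℝ^m, d : ℕ → ℝ^r, y : ℕ → ℝ^p satisfy for all k: x(k+1) = A·x(k) + B·u(k) + E·d(k), y(k) = C·x(k), z(k+1) = A_U·z(k) + B_u·u(k) + B_y·y(k), and set e(k) = x(k) − (z(k) + D·y(k)). Then e(k) = A_U^k · e(0) for all k, and e(k) = 0 for all k ≥ n. -/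
open Matrix

lemma nilp_pow_card {n : ℕ} {M : Matrix (Fin n) (Fin n) ℝ} (h : IsNilpotent M) :
    M ^ n = 0 := by
  have h1 := Matrix.isNilpotent_charpoly_sub_pow_of_isNilpotent h
  have h2 : M.charpoly - Polynomial.X ^ (Fintype.card (Fin n)) = 0 := h1.eq_zero
  have h3 : M.charpoly = Polynomial.X ^ n := by
    have := sub_eq_zero.mp h2
    simpa using this
  have h4 := M.aeval_self_charpoly
  rwa [h3, Polynomial.aeval_X_pow] at h4

/-- For the fault-free system, under the UIO constraint equations (with A_U nilpotent),
the estimation error satisfies e(k) = A_U^k e(0) and is zero from time n onwards. -/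
theorem stmt_3 {n m p r : ℕ}
    (A : Matrix (Fin n) (Fin n) ℝ) (B : Matrix (Fin n) (Fin m) ℝ)
    (C : Matrix (Fin p) (Fin n) ℝ) (E : Matrix (Fin n) (Fin r) ℝ)
    (A_U : Matrix (Fin n) (Fin n) ℝ) (B_u : Matrix (Fin n) (Fin m) ℝ)
    (B_y : Matrix (Fin n) (Fin p) ℝ) (D : Matrix (Fin n) (Fin p) ℝ)
    (hc1 : (1 - D * C) * A - A_U * (1 - D * C) = B_y * C)
    (hc2 : B_u = (1 - D * C) * B)
    (hc3 : (1 - D * C) * E = 0)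
    (hc4 : IsNilpotent A_U)
    (x z : ℕ → Fin n → ℝ) (u : ℕ → Fin m → ℝ) (d : ℕ → Fin r → ℝ)
    (y : ℕ → Fin p → ℝ)
    (hx : ∀ k, x (k + 1) = A.mulVec (x k) + B.mulVec (u k) + E.mulVec (d k))
    (hy : ∀ k, y k = C.mulVec (x k))
    (hz : ∀ k, z (k + 1) =
      A_U.mulVec (z k) + B_u.mulVec (u k) + B_y.mulVec (y k))
    (e : ℕ → Fin n → ℝ)
    (he : ∀ k, e k = x k - (z k + D.mulVec (y k))) :
    (∀ k, e k = (A_U ^ k).mulVec (e 0)) ∧ (∀ k, n ≤ k → e k = 0) := by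
  have hek : ∀ k, e k = (1 - D * C).mulVec (x k) - z k := by
    intro k
    rw [he, hy, Matrix.sub_mulVec, Matrix.one_mulVec, ← Matrix.mulVec_mulVec]
    abel
  have h2 : (1 - D * C) * A = B_y * C + A_U * (1 - D * C) := by
    rw [← hc1]; abel
  have step : ∀ k, e (k + 1) = A_U.mulVec (e k) := by
    intro k
    rw [hek, hek, hx, hz, hy, hc2]
    have h1 : (1 - D * C).mulVec (E.mulVec (d k)) = 0 := by
      rw [Matrix.mulVec_mulVec, hc3, Matrix.zero_mulVec]
    have h3 : (1 - D * C).mulVec (A.mulVec (x k))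
        = B_y.mulVec (C.mulVec (x k)) + A_U.mulVec ((1 - D * C).mulVec (x k)) := by
      rw [Matrix.mulVec_mulVec, h2, Matrix.add_mulVec]
      simp [Matrix.mulVec_mulVec]
    rw [Matrix.mulVec_add, Matrix.mulVec_add, h1, h3, Matrix.mulVec_sub]
    simp only [← Matrix.mulVec_mulVec]
    abel
  have main : ∀ k, e k = (A_U ^ k).mulVec (e 0) := by
    intro k
    induction k with
    | zero => simp
    | succ k ih =>
        rw [step, ih, Matrix.mulVec_mulVec, ← pow_succ']
  refine ⟨main, fun k hk => ?_⟩
  obtain ⟨t, rfl⟩ := Nat.exists_eq_add_of_le hk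
  rw [main, pow_add, nilp_pow_card hc4, zero_mul, Matrix.zero_mulVec]
end

section
/- Let B ∈ ℝ^{n×m}, C ∈ ℝ^{p×n}, E ∈ ℝ^{n×r} with rank(C·E) = rank(E) = r, and let D ∈ ℝ^{n×p} satisfy (I_n − D·C)·E = 0 and rank(D) = r. Then the n×(m+r) matrix [C·B C·E] has rank m + r if and only if the p×m matrix C·(I_n − D·C)·B has full column rank m. -/
/-!
Full column rank means injectivity. If `N` is injective and `ker P = range N`, then `[M N]` is
injective iff `P * M` is. Apply this with `M = C * B`, `N = C * E` and `P = 1 - C * D`: from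
`(1 - D * C) * E = 0` we get `D * (C * E) = E`, so `range E ≤ range D`, and equal ranks make the
two ranges equal, which gives `ker P = range (C * E)`; finally `P * (C * B) = C * ((1 - D * C) * B)`.
-/

open Matrix

namespace Matrix

variable {l l' m n : Type*} [Fintype m] [Fintype n]

section CommRing

variable {R : Type*} [CommRing R]

theorem ker_one_sub_mul_eq_range_mul [Fintype l] [DecidableEq l] {C : Matrix l n R}
    {D : Matrix n l R} {E : Matrix n m R} (hDCE : D * (C * E) = E)
    (hDE : LinearMap.range D.mulVecLin ≤ LinearMap.range E.mulVecLin) :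
    LinearMap.ker (1 - C * D).mulVecLin = LinearMap.range (C * E).mulVecLin := by
  apply le_antisymm
  · intro x hx
    have hx : x = C *ᵥ (D *ᵥ x) := by
      simpa [sub_mulVec, sub_eq_zero, mulVec_mulVec] using hx
    obtain ⟨a, ha⟩ := hDE (LinearMap.mem_range_self D.mulVecLin x)
    refine ⟨a, ?_⟩
    simp only [mulVecLin_apply] at ha ⊢
    rw [← mulVec_mulVec, ha, ← hx]
  · rintro _ ⟨a, rfl⟩
    simp only [LinearMap.mem_ker, mulVecLin_apply, mulVec_mulVec, Matrix.sub_mul, Matrix.one_mul,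
      Matrix.mul_assoc, hDCE, sub_self, zero_mulVec]

theorem mulVec_fromCols_injective_iff {M : Matrix l m R} {N : Matrix l n R} {P : Matrix l' l R}
    [Fintype l] (hN : Function.Injective N.mulVec)
    (hP : LinearMap.ker P.mulVecLin = LinearMap.range N.mulVecLin) :
    Function.Injective (fromCols M N).mulVec ↔ Function.Injective (P * M).mulVec := by
  have hPN (w : n → R) : P *ᵥ (N *ᵥ w) = 0 := by
    have : N *ᵥ w ∈ LinearMap.ker P.mulVecLin := hP ▸ LinearMap.mem_range_self N.mulVecLin w
    simpa using this
  rw [← coe_mulVecLin, ← coe_mulVecLin (P * M), injective_iff_map_eq_zero,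
    injective_iff_map_eq_zero]
  constructor
  · intro hMN u hu
    have : M *ᵥ u ∈ LinearMap.ker P.mulVecLin := by simpa [mulVec_mulVec] using hu
    obtain ⟨a, ha⟩ := hP ▸ this
    rw [mulVecLin_apply] at ha
    have := hMN (u ⊕ᵥ -a) (by simp [← ha, mulVec_neg])
    simpa using congrArg (fun v => v ∘ Sum.inl) this
  · intro hPM v hv
    rw [← Sum.elim_comp_inl_inr v] at hv ⊢
    set u := v ∘ Sum.inl
    set w := v ∘ Sum.inr
    rw [mulVecLin_apply, fromCols_mulVec_sumElim] at hv
    have hu : u = 0 := hPM u <| by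
      simpa [← mulVec_mulVec, mulVec_add, hPN] using congrArg (P *ᵥ ·) hv
    have hw : w = 0 := hN <| by simpa [hu] using hv
    rw [hu, hw, Sum.elim_zero_zero]

end CommRing

section Field

variable {K : Type*} [Field K]

theorem rank_eq_card_iff_mulVec_injective (A : Matrix l n K) :
    A.rank = Fintype.card n ↔ Function.Injective A.mulVec := by
  rw [mulVec_injective_iff, linearIndependent_iff_card_eq_finrank_span, rank_eq_finrank_span_cols]
  exact eq_comm

theorem range_mulVecLin_mul_eq_of_rank_eq [Fintype l] (D : Matrix l m K) (F : Matrix m n K)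
    (h : (D * F).rank = D.rank) : LinearMap.range (D * F).mulVecLin = LinearMap.range D.mulVecLin :=
  Submodule.eq_of_le_of_finrank_eq
    (by rw [mulVecLin_mul]; exact LinearMap.range_comp_le_range _ _) h

end Field

end Matrix

/-- [C·B  C·E] has rank m+r iff C·(I − D·C)·B has full column rank m,
given rank(CE) = rank(E) = r, (I − D·C)·E = 0 and rank(D) = r. -/
theorem stmt_6 {n m p r : ℕ}
    (B : Matrix (Fin n) (Fin m) ℝ) (C : Matrix (Fin p) (Fin n) ℝ)
    (E : Matrix (Fin n) (Fin r) ℝ)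
    (hCE : (C * E).rank = r) (hE : E.rank = r)
    (D : Matrix (Fin n) (Fin p) ℝ)
    (hD1 : (1 - D * C) * E = 0) (hD2 : D.rank = r) :
    (Matrix.fromCols (C * B) (C * E)).rank = m + r ↔
      (C * ((1 - D * C) * B)).rank = m := by
  have hDCE : D * (C * E) = E := by
    rw [Matrix.sub_mul, Matrix.one_mul, sub_eq_zero, Matrix.mul_assoc] at hD1
    exact hD1.symm
  have hrange : LinearMap.range E.mulVecLin = LinearMap.range D.mulVecLin := by
    simpa [hDCE] using range_mulVecLin_mul_eq_of_rank_eq D (C * E) (by rw [hDCE, hE, hD2])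
  have hker := ker_one_sub_mul_eq_range_mul hDCE hrange.ge
  have hCE_inj : Function.Injective (C * E).mulVec :=
    (rank_eq_card_iff_mulVec_injective _).mp (by simpa using hCE)
  have hfull := rank_eq_card_iff_mulVec_injective (fromCols (C * B) (C * E))
  have hred := rank_eq_card_iff_mulVec_injective (C * ((1 - D * C) * B))
  simp only [Fintype.card_sum, Fintype.card_fin] at hfull hred
  rw [hfull, hred, mulVec_fromCols_injective_iff hCE_inj hker]
  have hPCB : (1 - C * D) * (C * B) = C * ((1 - D * C) * B) := by
    simp only [Matrix.sub_mul, Matrix.mul_sub, Matrix.one_mul, Matrix.mul_assoc]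
  rw [hPCB]
end

section
/- Let A ∈ ℝ^{n×n}, B ∈ ℝ^{n×m}, C ∈ ℝ^{p×n}, E ∈ ℝ^{n×r}, and let U_p ∈ ℝ^{m×N}, D_p ∈ ℝ^{r×N}, X_p, X_f ∈ ℝ^{n×N}, Y_p ∈ ℝ^{p×N} satisfy X_f = A·X_p + B·U_p + E·D_p and Y_p = C·X_p. Assume the stacked (m+r+n)×N matrix [U_p; D_p; X_p] has full row rank m+r+n. Then the following are equivalent: (i) for every nonzero z ∈ ℂ the complex (n+p)×(n+r) block matrix [[z·I_n − A, −E],[C, 0]] has rank n + r; (ii) for every nonzero z ∈ ℂ the complex (n+p+m)×N stacked matrix [z·X_p − X_f; Y_p; U_p] has rank n + r + m. -/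
open Matrix

section aux

variable {K : Type*} [Field K]

lemma myrank_submatrix {k l m o : Type*} [Fintype l] [Fintype o]
    (M : Matrix k l K) (e₁ : m ≃ k) (e₂ : o ≃ l) :
    (M.submatrix e₁ e₂).rank = M.rank := by
  rw [Matrix.rank, Matrix.rank, Matrix.mulVecLin_submatrix, LinearMap.range_comp,
    LinearMap.range_comp,
    show LinearMap.funLeft K K (⇑e₂.symm) = LinearEquiv.funCongrLeft K K e₂.symm from rfl,
    LinearEquiv.range, Submodule.map_top,
    show LinearMap.funLeft K K (⇑e₁) = LinearEquiv.funCongrLeft K K e₁ from rfl,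
    LinearEquiv.finrank_map_eq]

lemma mysurj_of_rank {m n : Type*} [Fintype m] [Fintype n] (M : Matrix m n K)
    (h : M.rank = Fintype.card m) : Function.Surjective M.mulVecLin := by
  rw [← LinearMap.range_eq_top]
  apply Submodule.eq_top_of_finrank_eq
  rw [show Module.finrank K (m → K) = Fintype.card m from Module.finrank_pi K]
  exact h

lemma myrank_mul_right {l m n : Type*} [Fintype m] [Fintype n]
    (A : Matrix l m K) (B : Matrix m n K) (h : Function.Surjective B.mulVecLin) :
    (A * B).rank = A.rank := by
  rw [Matrix.rank, Matrix.mulVecLin_mul,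
    LinearMap.range_comp_of_range_eq_top _ (LinearMap.range_eq_top.mpr h), ← Matrix.rank]

lemma myrange_prodMap {R M M₂ M₃ M₄ : Type*} [CommRing R] [AddCommGroup M] [AddCommGroup M₂]
    [AddCommGroup M₃] [AddCommGroup M₄] [Module R M] [Module R M₂] [Module R M₃] [Module R M₄]
    (f : M →ₗ[R] M₂) (g : M₃ →ₗ[R] M₄) :
    LinearMap.range (f.prodMap g) = (LinearMap.range f).prod (LinearMap.range g) := by
  ext ⟨x, y⟩
  simp only [LinearMap.mem_range, Submodule.mem_prod, LinearMap.prodMap_apply, Prod.ext_iff]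
  constructor
  · rintro ⟨⟨a, b⟩, h1, h2⟩
    exact ⟨⟨a, h1⟩, ⟨b, h2⟩⟩
  · rintro ⟨⟨a, ha⟩, ⟨b, hb⟩⟩
    exact ⟨(a, b), ha, hb⟩

lemma myfinrank_prod {V W : Type*} [AddCommGroup V] [AddCommGroup W] [Module K V] [Module K W]
    [FiniteDimensional K V] [FiniteDimensional K W] (p : Submodule K V) (q : Submodule K W) :
    Module.finrank K (p.prod q) = Module.finrank K p + Module.finrank K q := by
  have e : (p.prod q) ≃ₗ[K] p × q :=
    { toFun := fun x => (⟨x.1.1, x.2.1⟩, ⟨x.1.2, x.2.2⟩)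
      invFun := fun x => ⟨(x.1.1, x.2.1), ⟨x.1.2, x.2.2⟩⟩
      map_add' := fun a b => rfl
      map_smul' := fun c a => rfl
      left_inv := fun a => rfl
      right_inv := fun a => rfl }
  rw [e.finrank_eq, Module.finrank_prod]

lemma myrank_fromBlocks_diag {m₁ n₁ m₂ n₂ : Type*} [Fintype m₁] [Fintype n₁] [Fintype m₂]
    [Fintype n₂] (A : Matrix m₁ n₁ K) (D : Matrix m₂ n₂ K) :
    (Matrix.fromBlocks A 0 0 D).rank = A.rank + D.rank := by
  have key : (Matrix.fromBlocks A 0 0 D).mulVecLin =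
      ((LinearEquiv.sumArrowLequivProdArrow m₁ m₂ K K).symm : (m₁ → K) × (m₂ → K) →ₗ[K] _) ∘ₗ
        (A.mulVecLin.prodMap D.mulVecLin) ∘ₗ
        ((LinearEquiv.sumArrowLequivProdArrow n₁ n₂ K K : (n₁ ⊕ n₂ → K) ≃ₗ[K] _) :
          (n₁ ⊕ n₂ → K) →ₗ[K] _) := by
    apply LinearMap.ext
    intro v
    funext i
    cases i with
    | inl i =>
      simp [Matrix.mulVecLin_apply, Matrix.mulVec, dotProduct, Fintype.sum_sum_type,
        LinearEquiv.sumArrowLequivProdArrow]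
    | inr i =>
      simp [Matrix.mulVecLin_apply, Matrix.mulVec, dotProduct, Fintype.sum_sum_type,
        LinearEquiv.sumArrowLequivProdArrow]
  rw [Matrix.rank, key, LinearMap.range_comp, LinearMap.range_comp,
    LinearEquiv.range, Submodule.map_top, LinearEquiv.finrank_map_eq,
    myrange_prodMap, myfinrank_prod]
  rfl

lemma mymap_rank {m n : Type*} [Fintype m] [Fintype n] [DecidableEq m]
    (W : Matrix m n ℝ) (h : W.rank = Fintype.card m) :
    (W.map (algebraMap ℝ ℂ)).rank = Fintype.card m := by
  set f := algebraMap ℝ ℂ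
  have h1 : (W * Wᵀ).rank = Fintype.card m := by
    have := Matrix.rank_transpose_mul_self Wᵀ
    rwa [Matrix.transpose_transpose, Matrix.rank_transpose, h] at this
  have hunit : IsUnit (W * Wᵀ) := by
    rw [← Matrix.mulVec_surjective_iff_isUnit]
    exact mysurj_of_rank (K := ℝ) (W * Wᵀ) h1
  have hdet : IsUnit (W * Wᵀ).det := (Matrix.isUnit_iff_isUnit_det _).mp hunit
  have hdet' : IsUnit ((W * Wᵀ).map f).det := by
    have := (RingHom.map_det f (W * Wᵀ)).symm
    rw [show f.mapMatrix (W * Wᵀ) = (W * Wᵀ).map f from rfl] at this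
    rw [this]
    exact hdet.map f
  have heq : (W.map f) * (W.map f)ᵀ = (W * Wᵀ).map f := by
    rw [Matrix.map_mul, Matrix.transpose_map]
  have hrank2 : ((W * Wᵀ).map f).rank = Fintype.card m :=
    Matrix.rank_of_isUnit _ ((Matrix.isUnit_iff_isUnit_det _).mpr hdet')
  refine le_antisymm (Matrix.rank_le_card_height _) ?_
  calc Fintype.card m = ((W * Wᵀ).map f).rank := hrank2.symm
    _ = ((W.map f) * (W.map f)ᵀ).rank := by rw [heq]
    _ ≤ (W.map f).rank := Matrix.rank_mul_le_left _ _

end aux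

/-- helper: addition of stacked rows -/
lemma myfromRows_add {R m₁ m₂ n : Type*} [AddCommMonoid R] (A₁ B₁ : Matrix m₁ n R)
    (A₂ B₂ : Matrix m₂ n R) :
    Matrix.fromRows A₁ A₂ + Matrix.fromRows B₁ B₂ = Matrix.fromRows (A₁ + B₁) (A₂ + B₂) := by
  ext i j
  rcases i with i | i <;> simp

/-- Under the persistence-of-excitation assumption, the strong* reconstructability
rank condition is equivalent to its data-based counterpart. -/
theorem stmt_8 {n m p r N : ℕ}
    (A : Matrix (Fin n) (Fin n) ℝ) (B : Matrix (Fin n) (Fin m) ℝ)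
    (C : Matrix (Fin p) (Fin n) ℝ) (E : Matrix (Fin n) (Fin r) ℝ)
    (U_p : Matrix (Fin m) (Fin N) ℝ) (D_p : Matrix (Fin r) (Fin N) ℝ)
    (X_p X_f : Matrix (Fin n) (Fin N) ℝ) (Y_p : Matrix (Fin p) (Fin N) ℝ)
    (hdata : X_f = A * X_p + B * U_p + E * D_p)
    (hYp : Y_p = C * X_p)
    (hFRR : (Matrix.fromRows U_p (Matrix.fromRows D_p X_p)).rank = m + r + n) :
    (∀ z : ℂ, z ≠ 0 →
        (Matrix.fromBlocks
            (z • (1 : Matrix (Fin n) (Fin n) ℂ) - A.map (algebraMap ℝ ℂ))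
            (-(E.map (algebraMap ℝ ℂ)))
            (C.map (algebraMap ℝ ℂ)) 0).rank = n + r) ↔
      (∀ z : ℂ, z ≠ 0 →
        (Matrix.fromRows
            (z • X_p.map (algebraMap ℝ ℂ) - X_f.map (algebraMap ℝ ℂ))
            (Matrix.fromRows (Y_p.map (algebraMap ℝ ℂ))
              (U_p.map (algebraMap ℝ ℂ)))).rank = n + r + m) := by
  set f := algebraMap ℝ ℂ with hf
  set A' := A.map f with hA'
  set B' := B.map f with hB'
  set C' := C.map f with hC'
  set E' := E.map f with hE'
  set U' := U_p.map f with hU'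
  set D' := D_p.map f with hD'
  set X' := X_p.map f with hX'
  set Xf' := X_f.map f with hXf'
  set Y' := Y_p.map f with hY'
  -- complexified data equations
  have hadd : ∀ a b : ℝ, f (a + b) = f a + f b := fun a b => map_add f a b
  have hdata' : Xf' = A' * X' + B' * U' + E' * D' := by
    rw [hXf', hdata, Matrix.map_add _ hadd, Matrix.map_add _ hadd,
      Matrix.map_mul, Matrix.map_mul, Matrix.map_mul]
  have hYp' : Y' = C' * X' := by
    rw [hY', hYp, Matrix.map_mul]
  -- the complexified data matrix has full row rank
  have hWmap : (Matrix.fromRows U_p (Matrix.fromRows D_p X_p)).map f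
      = Matrix.fromRows U' (Matrix.fromRows D' X') := by
    ext i j
    rcases i with i | i
    · simp [Matrix.map_apply, hU']
    · rcases i with i | i <;> simp [Matrix.map_apply, hD', hX']
  have hWrank : (Matrix.fromRows U' (Matrix.fromRows D' X')).rank
      = Fintype.card (Fin m ⊕ (Fin r ⊕ Fin n)) := by
    rw [← hWmap]
    apply mymap_rank
    simp only [Fintype.card_sum, Fintype.card_fin]
    omega
  -- reorder the rows: W2 = [U; X; D]
  set W2 : Matrix (Fin m ⊕ (Fin n ⊕ Fin r)) (Fin N) ℂ :=
    Matrix.fromRows U' (Matrix.fromRows X' D') with hW2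
  have hW2eq : W2 = (Matrix.fromRows U' (Matrix.fromRows D' X')).submatrix
      ((Equiv.refl (Fin m)).sumCongr (Equiv.sumComm (Fin n) (Fin r))) (Equiv.refl (Fin N)) := by
    ext i j
    rcases i with i | i
    · simp [hW2]
    · rcases i with i | i <;> simp [hW2]
  have hW2rank : W2.rank = Fintype.card (Fin m ⊕ (Fin n ⊕ Fin r)) := by
    rw [hW2eq, myrank_submatrix, hWrank]
    simp only [Fintype.card_sum, Fintype.card_fin]
    omega
  have hsurj : Function.Surjective W2.mulVecLin := mysurj_of_rank _ hW2rank
  -- the key rank identity, for every z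
  have key : ∀ z : ℂ,
      (Matrix.fromRows (z • X' - Xf') (Matrix.fromRows Y' U')).rank
        = m + (Matrix.fromBlocks (z • (1 : Matrix (Fin n) (Fin n) ℂ) - A') (-E') C' 0).rank := by
    intro z
    set M : Matrix (Fin n ⊕ Fin p) (Fin n ⊕ Fin r) ℂ :=
      Matrix.fromBlocks (z • (1 : Matrix (Fin n) (Fin n) ℂ) - A') (-E') C' 0 with hM
    set G : Matrix ((Fin n ⊕ Fin p) ⊕ Fin m) (Fin m ⊕ (Fin n ⊕ Fin r)) ℂ :=
      Matrix.fromBlocks (Matrix.fromRows (-B') (0 : Matrix (Fin p) (Fin m) ℂ)) M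
        (1 : Matrix (Fin m) (Fin m) ℂ) 0 with hG
    -- G * W2 equals the (re-associated) data matrix
    have hGW : G * W2 = Matrix.fromRows
        (Matrix.fromRows (z • X' - Xf') Y') U' := by
      rw [hG, hW2, Matrix.fromBlocks_mul_fromRows, Matrix.fromRows_mul, hM,
        Matrix.fromBlocks_mul_fromRows, myfromRows_add]
      rw [Matrix.one_mul, Matrix.zero_mul, Matrix.zero_mul, Matrix.zero_mul, zero_add,
        add_zero, add_zero, hdata', hYp', Matrix.sub_mul, Matrix.neg_mul, Matrix.neg_mul,
        Matrix.smul_mul, Matrix.one_mul]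
      refine congrArg₂ Matrix.fromRows (congrArg₂ Matrix.fromRows ?_ rfl) rfl
      abel
    have hsub : Matrix.fromRows (z • X' - Xf') (Matrix.fromRows Y' U')
        = (G * W2).submatrix ((Equiv.sumAssoc (Fin n) (Fin p) (Fin m)).symm)
            (Equiv.refl (Fin N)) := by
      rw [hGW]
      ext i j
      rcases i with i | i
      · simp
      · rcases i with i | i <;> simp
    rw [hsub, myrank_submatrix, myrank_mul_right _ _ hsurj]
    -- row-reduce G
    set L : Matrix ((Fin n ⊕ Fin p) ⊕ Fin m) ((Fin n ⊕ Fin p) ⊕ Fin m) ℂ :=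
      Matrix.fromBlocks 1 (-(Matrix.fromRows (-B') (0 : Matrix (Fin p) (Fin m) ℂ))) 0 1 with hL
    have hLdet : IsUnit L.det := by
      rw [hL, Matrix.det_fromBlocks_zero₂₁]
      simp
    have hLG : L * G = Matrix.fromBlocks 0 M (1 : Matrix (Fin m) (Fin m) ℂ) 0 := by
      rw [hL, hG, Matrix.fromBlocks_multiply]
      simp [myfromRows_add]
    have hGr : G.rank = (Matrix.fromBlocks 0 M (1 : Matrix (Fin m) (Fin m) ℂ) 0).rank := by
      rw [← hLG, Matrix.rank_mul_eq_right_of_isUnit_det L G hLdet]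
    rw [hGr]
    have hswap : Matrix.fromBlocks 0 M (1 : Matrix (Fin m) (Fin m) ℂ) 0
        = (Matrix.fromBlocks M 0 0 (1 : Matrix (Fin m) (Fin m) ℂ)).submatrix
            (Equiv.refl ((Fin n ⊕ Fin p) ⊕ Fin m)) (Equiv.sumComm (Fin m) (Fin n ⊕ Fin r)) := by
      ext i j
      rcases i with i | i <;> rcases j with j | j <;> simp
    rw [hswap, myrank_submatrix, myrank_fromBlocks_diag, Matrix.rank_one, Fintype.card_fin]
    omega
  constructor
  · intro h z hz
    have hk := key z
    rw [h z hz] at hk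
    omega
  · intro h z hz
    have hk := key z
    rw [h z hz] at hk
    omega
end

section
/- Let A ∈ ℝ^{n×n}, B ∈ ℝ^{n×m}, C ∈ ℝ^{p×n}, E ∈ ℝ^{n×r}, and let U_p ∈ ℝ^{m×N}, D_p ∈ ℝ^{r×N}, X_p, X_f ∈ ℝ^{n×N}, Y_f ∈ ℝ^{p×N} satisfy X_f = A·X_p + B·U_p + E·D_p and Y_f = C·X_f. Assume the stacked (m+r+n)×N matrix [U_p; D_p; X_p] has full row rank m+r+n. Then the matrix [C·B C·E] has rank m + r if and only if the stacked (n+p)×N matrix [X_p; Y_f] has rank n + r + m. -/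
/-!
The data equations factor the stacked data as
`[X_p; Y_f] = [[1, 0], [C A, [C B, C E]]] * [X_p; U_p; D_p]`.
Persistence of excitation makes the right factor surjective, so the product has the rank of the
left factor, and eliminating `C A` by a unimodular row operation leaves the block-diagonal matrix
`diag(1, [C B, C E])`. Hence `rank [X_p; Y_f] = n + rank [C B, C E]`.
-/

open Matrix

variable {K : Type*} [Field K]

theorem Submodule.finrank_prod {V W : Type*} [AddCommGroup V] [Module K V] [AddCommGroup W]
    [Module K W] (p : Submodule K V) (q : Submodule K W) [Module.Finite K p]
    [Module.Finite K q] :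
    Module.finrank K (p.prod q) = Module.finrank K p + Module.finrank K q := by
  rw [← p.range_subtype, ← q.range_subtype, ← LinearMap.range_prodMap,
    LinearMap.finrank_range_of_inj (p.injective_subtype.prodMap q.injective_subtype),
    Module.finrank_prod, p.range_subtype, q.range_subtype]

namespace Matrix

variable {l m n o : Type*}

theorem mulVecLin_fromBlocks_zero_zero [Fintype n] [Fintype o] (A : Matrix l n K)
    (D : Matrix m o K) :
    (fromBlocks A 0 0 D).mulVecLin =
      (LinearEquiv.sumArrowLequivProdArrow l m K K).symm.toLinearMap ∘ₗ
        A.mulVecLin.prodMap D.mulVecLin ∘ₗ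
          (LinearEquiv.sumArrowLequivProdArrow n o K K).toLinearMap := by
  ext x i
  rcases i with i | i <;>
    simp [fromBlocks_mulVec, LinearEquiv.sumArrowLequivProdArrow, Equiv.sumArrowEquivProdArrow]

theorem rank_fromBlocks_zero_zero [Fintype n] [Fintype o] (A : Matrix l n K) (D : Matrix m o K) :
    (fromBlocks A 0 0 D).rank = A.rank + D.rank := by
  rw [rank, mulVecLin_fromBlocks_zero_zero, LinearMap.range_comp,
    LinearMap.range_comp_of_range_eq_top _ (LinearEquiv.range _), LinearEquiv.finrank_map_eq,
    LinearMap.range_prodMap, Submodule.finrank_prod, rank, rank]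

theorem rank_fromBlocks_one_zero [Fintype n] [DecidableEq n] [Fintype m] [DecidableEq m]
    [Fintype o] (C : Matrix m n K) (D : Matrix m o K) :
    (fromBlocks (1 : Matrix n n K) 0 C D).rank = Fintype.card n + D.rank := by
  have hfactor : fromBlocks (1 : Matrix n n K) 0 C D =
      (fromBlocks 1 0 C 1 : Matrix (n ⊕ m) (n ⊕ m) K) *
        fromBlocks (1 : Matrix n n K) 0 0 D := by
    simp [fromBlocks_multiply]
  rw [hfactor, rank_mul_eq_right_of_isUnit_det _ _ (by simp),
    rank_fromBlocks_zero_zero, rank_one]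

theorem rank_mul_eq_left_of_rank_eq_card [Fintype m] [Fintype n] (G : Matrix l m K)
    (M : Matrix m n K) (hM : M.rank = Fintype.card m) : (G * M).rank = G.rank := by
  have hsurj : LinearMap.range M.mulVecLin = ⊤ :=
    Submodule.eq_top_of_finrank_eq (by rw [← rank, hM, Module.finrank_fintype_fun_eq_card])
  rw [rank, rank, mulVecLin_mul, LinearMap.range_comp_of_range_eq_top _ hsurj]

end Matrix

theorem fromRows_eq_fromBlocks_mul_fromRows {R : Type*} [Ring R] {x u d y ι : Type*}
    [Fintype x] [DecidableEq x] [Fintype u] [Fintype d]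
    (A : Matrix x x R) (B : Matrix x u R) (C : Matrix y x R) (E : Matrix x d R)
    (U_p : Matrix u ι R) (D_p : Matrix d ι R) (X_p X_f : Matrix x ι R) (Y_f : Matrix y ι R)
    (hdata : X_f = A * X_p + B * U_p + E * D_p) (hYf : Y_f = C * X_f) :
    fromRows X_p Y_f =
      fromBlocks 1 0 (C * A) (fromCols (C * B) (C * E)) * fromRows X_p (fromRows U_p D_p) := by
  rw [← fromRows_fromCols_eq_fromBlocks, fromRows_mul, fromCols_mul_fromRows,
    fromCols_mul_fromRows, fromCols_mul_fromRows, hYf, hdata]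
  simp only [Matrix.one_mul, Matrix.zero_mul, add_zero, Matrix.mul_add, Matrix.mul_assoc, add_assoc]

/-- Under the persistence-of-excitation assumption, rank [C·B  C·E] = m + r
is equivalent to the data-based rank condition on [X_p; Y_f]. -/
theorem stmt_9 {n m p r N : ℕ}
    (A : Matrix (Fin n) (Fin n) ℝ) (B : Matrix (Fin n) (Fin m) ℝ)
    (C : Matrix (Fin p) (Fin n) ℝ) (E : Matrix (Fin n) (Fin r) ℝ)
    (U_p : Matrix (Fin m) (Fin N) ℝ) (D_p : Matrix (Fin r) (Fin N) ℝ)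
    (X_p X_f : Matrix (Fin n) (Fin N) ℝ) (Y_f : Matrix (Fin p) (Fin N) ℝ)
    (hdata : X_f = A * X_p + B * U_p + E * D_p)
    (hYf : Y_f = C * X_f)
    (hFRR : (Matrix.fromRows U_p (Matrix.fromRows D_p X_p)).rank = m + r + n) :
    (Matrix.fromCols (C * B) (C * E)).rank = m + r ↔
      (Matrix.fromRows X_p Y_f).rank = n + r + m := by
  have hreorder : fromRows X_p (fromRows U_p D_p) =
      (fromRows U_p (fromRows D_p X_p)).submatrix
        ((Equiv.sumComm _ _).trans (Equiv.sumAssoc _ _ _)) (Equiv.refl _) := by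
    ext (i | i | i) j <;> rfl
  have hfull :
      (fromRows X_p (fromRows U_p D_p)).rank = Fintype.card (Fin n ⊕ (Fin m ⊕ Fin r)) := by
    rw [hreorder, rank_submatrix _ _ (Equiv.refl _)]
    simp only [hFRR, Fintype.card_sum, Fintype.card_fin]
    ring
  have hrank : (fromRows X_p Y_f).rank = n + (fromCols (C * B) (C * E)).rank := by
    rw [fromRows_eq_fromBlocks_mul_fromRows A B C E U_p D_p X_p X_f Y_f hdata hYf,
      rank_mul_eq_left_of_rank_eq_card _ _ hfull, rank_fromBlocks_one_zero, Fintype.card_fin]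
  omega
end

section
/- Let A ∈ ℝ^{n×n}, B ∈ ℝ^{n×m}, C ∈ ℝ^{p×n}, E ∈ ℝ^{n×r}, and let U_p ∈ ℝ^{m×N}, D_p ∈ ℝ^{r×N}, X_p, X_f ∈ ℝ^{n×N}, Y_f ∈ ℝ^{p×N} satisfy X_f = A·X_p + B·U_p + E·D_p and Y_f = C·X_f, with the stacked (m+r+n)×N matrix [U_p; D_p; X_p] of full row rank m+r+n. Suppose that for every nonzero z ∈ ℂ the complex (n+p)×(n+r) block matrix [[z·I_n − A, −E],[C, 0]] has rank n + r, and that [C·B C·E] has rank m + r. Then there exist matrices T₁ ∈ ℝ^{n×m}, T₃ ∈ ℝ^{n×n}, T₄ ∈ ℝ^{n×p} such that X_f = T₁·U_p + T₃·X_p + T₄·Y_f, the pair (T₃, C) is reconstructable (i.e. there exists L ∈ ℝ^{n×p} with T₃ − L·C nilpotent), and C·T₁ has full column rank m. -/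
/-!
Let `S` be the block of a left inverse of `[C B, C E]` with `S C B = 0` and `S C E = 1`. Then
`T₁ = B`, `T₃ = A - E S C A`, `T₄ = E S` reproduce the data, and `C T₁ = C B` has a left inverse.
If `T₃ v = z v` and `C v = 0` with `z ≠ 0`, then `(v, -S C A v)` lies in the kernel of the
Hautus matrix `[[z I - A, -E], [C, 0]]`, so `v = 0`.

This Hautus condition yields a gain `L` with `T₃ - L C` nilpotent. Suppose `G` maps `V` into
itself and is nilpotent modulo `V`. An output injection with values in `V` makes `G` map `V` into
`G (V ⊓ ker C)`, and the new map is still nilpotent modulo that smaller subspace. This only stops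
at a subspace of `ker C` that `G` maps onto itself. Such a subspace must be `0`, because otherwise
its complex span would contain an eigenvector with a nonzero eigenvalue that `C` kills.
-/

open Matrix Module

namespace LinearMap

variable {K X Y : Type*} [Field K] [AddCommGroup X] [Module K X] [AddCommGroup Y] [Module K Y]

lemma exists_mem_and_sub_comp_mem_map (G : Module.End K X) (C : X →ₗ[K] Y)
    {V : Submodule K X} (hV : V.map G ≤ V) :
    ∃ L : Y →ₗ[K] X, (∀ y, L y ∈ V) ∧ ∀ x ∈ V, G x - L (C x) ∈ (V ⊓ ker C).map G := by
  obtain ⟨Q, hQ⟩ := (V ⊓ ker C).exists_isCompl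
  set V' := V ⊓ Q
  have hinj : ker (C ∘ₗ V'.subtype) = ⊥ := by
    refine (Submodule.eq_bot_iff _).2 fun x hx => ?_
    have hx' : (x : X) ∈ (V ⊓ ker C) ⊓ Q := ⟨⟨x.2.1, hx⟩, x.2.2⟩
    rw [hQ.inf_eq_bot, Submodule.mem_bot] at hx'
    exact Subtype.ext hx'
  obtain ⟨g, hg⟩ := (C ∘ₗ V'.subtype).exists_leftInverse_of_injective hinj
  refine ⟨G ∘ₗ V'.subtype ∘ₗ g, fun y => hV ⟨_, (g y).2.1, rfl⟩, fun x hx => ?_⟩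
  obtain ⟨a, ha, b, hb, rfl⟩ := Submodule.mem_sup.1 (hQ.sup_eq_top ▸ Submodule.mem_top (x := x))
  have hbV : b ∈ V := by simpa using V.sub_mem hx ha.1
  have hgb : g (C (a + b)) = ⟨b, hbV, hb⟩ := by
    rw [map_add, mem_ker.1 ha.2, zero_add]
    exact LinearMap.congr_fun hg ⟨b, hbV, hb⟩
  rw [comp_apply, comp_apply, hgb, Submodule.subtype_apply, map_add, add_sub_cancel_right]
  exact Submodule.mem_map_of_mem ha

lemma pow_apply_sub_pow_apply_mem {G G' : Module.End K X} {V : Submodule K X}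
    (hV : V.map G' ≤ V) (h : ∀ x, G x - G' x ∈ V) (k : ℕ) (x : X) :
    (G ^ k) x - (G' ^ k) x ∈ V := by
  induction k generalizing x with
  | zero => simp
  | succ k ih =>
    have hsplit : (G ^ (k + 1)) x - (G' ^ (k + 1)) x =
        (G ((G ^ k) x) - G' ((G ^ k) x)) + G' ((G ^ k) x - (G' ^ k) x) := by
      rw [pow_succ', pow_succ', Module.End.mul_apply, Module.End.mul_apply, map_sub]
      abel
    rw [hsplit]
    exact V.add_mem (h _) (hV ⟨_, ih x, rfl⟩)

variable [FiniteDimensional K X]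

theorem exists_isNilpotent_sub_comp_of_pow_mem (C : X →ₗ[K] Y) (V : Submodule K X)
    (G : Module.End K X) (k : ℕ) (hV : V.map G ≤ V) (hk : ∀ x, (G ^ k) x ∈ V)
    (hG : ∀ W ≤ ker C, W.map G = W → W = ⊥) :
    ∃ L : Y →ₗ[K] X, IsNilpotent (G - L ∘ₗ C) := by
  induction hd : finrank K V using Nat.strong_induction_on generalizing V G k with
  | _ d ih =>
  -- If `G (V ⊓ ker C) = V`, dimension counting forces `V ≤ ker C`, so `V = ⊥` by `hG`.
  by_cases hV₁ : (V ⊓ ker C).map G = V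
  · have hVC : V ⊓ ker C = V := Submodule.eq_of_le_of_finrank_le inf_le_left <|
      calc finrank K V = finrank K ((V ⊓ ker C).map G) := by rw [hV₁]
        _ ≤ _ := Submodule.finrank_map_le G _
    have hbot : V = ⊥ := hG V (hVC ▸ inf_le_right) (by rwa [hVC] at hV₁)
    refine ⟨0, k, LinearMap.ext fun x => ?_⟩
    simpa [hbot] using hk x
  obtain ⟨L₀, hL₀V, hL₀⟩ := exists_mem_and_sub_comp_mem_map G C hV
  set V₁ := (V ⊓ ker C).map G
  have hV₁V : V₁ ≤ V := (Submodule.map_mono inf_le_left).trans hV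
  set G' := G - L₀ ∘ₗ C
  have hG'V : ∀ x ∈ V, G' x ∈ V₁ := hL₀
  have hG'_map : ∀ W ≤ ker C, W.map G' = W.map G := fun W hW => by
    ext x
    simp only [Submodule.mem_map]
    exact exists_congr fun y => and_congr_right fun hy => by simp [G', mem_ker.1 (hW hy)]
  have hG'k : ∀ x, (G' ^ (k + 1)) x ∈ V₁ := fun x => by
    have hmem : (G' ^ k) x ∈ V := (V.sub_mem_iff_right (hk x)).1 <| pow_apply_sub_pow_apply_mem
      (fun _ ⟨y, hy, hxy⟩ => hxy ▸ hV₁V (hG'V y hy)) (fun y => by simpa [G'] using hL₀V (C y)) k x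
    rw [pow_succ', Module.End.mul_apply]
    exact hG'V _ hmem
  obtain ⟨L₁, hL₁⟩ := ih _ (hd ▸ Submodule.finrank_lt_finrank_of_lt (lt_of_le_of_ne hV₁V hV₁))
    V₁ G' (k + 1) (fun _ ⟨y, hy, hxy⟩ => hxy ▸ hG'V y (hV₁V hy)) hG'k
    (fun W hW hW' => hG W hW ((hG'_map W hW).symm.trans hW')) rfl
  exact ⟨L₀ + L₁, by rwa [add_comp, ← sub_sub]⟩

theorem exists_isNilpotent_sub_comp (F : Module.End K X) (C : X →ₗ[K] Y)
    (hF : ∀ W ≤ ker C, W.map F = W → W = ⊥) : ∃ L : Y →ₗ[K] X, IsNilpotent (F - L ∘ₗ C) :=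
  exists_isNilpotent_sub_comp_of_pow_mem C ⊤ F 0 le_top (fun _ => trivial) hF

end LinearMap

namespace Matrix

lemma map_mulVec_comp {R S m n : Type*} [Fintype n] [NonAssocSemiring R] [NonAssocSemiring S]
    (f : R →+* S) (M : Matrix m n R) (v : n → R) : M.map f *ᵥ (f ∘ v) = f ∘ (M *ᵥ v) :=
  funext fun i => (f.map_mulVec M v i).symm

section Rank

variable {R m n : Type*} [Fintype n]

lemma mulVec_injective_of_rank_eq_card [Field R] {A : Matrix m n R}
    (h : A.rank = Fintype.card n) : Function.Injective A.mulVec :=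
  mulVec_injective_iff.2 <| linearIndependent_iff_card_eq_finrank_span.2 <|
    h ▸ A.rank_eq_finrank_span_cols

lemma exists_mul_eq_one_of_rank_eq_card [Field R] [Fintype m] [DecidableEq n] {A : Matrix m n R}
    (h : A.rank = Fintype.card n) : ∃ B : Matrix n m R, B * A = 1 := by
  refine vecMul_surjective_iff_exists_left_inverse.1 ?_
  rw [← coe_vecMulLinear, ← LinearMap.range_eq_top, range_vecMulLinear]
  refine Submodule.eq_top_of_finrank_eq ?_
  rw [← rank_eq_finrank_span_row, h, Module.finrank_fintype_fun_eq_card]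

lemma rank_eq_card_of_mul_eq_one [CommRing R] [Nontrivial R] [Fintype m] [DecidableEq n]
    {A : Matrix m n R} {B : Matrix n m R} (h : B * A = 1) : A.rank = Fintype.card n :=
  le_antisymm A.rank_le_card_width (by simpa [h, rank_one] using rank_mul_le_right B A)

end Rank

lemma eq_zero_of_mulVec_eq_smul_of_injective_fromBlocks {R n r p : Type*} [CommRing R] [Fintype n]
    [DecidableEq n] [Fintype r] {z : R}
    {A : Matrix n n R} {E : Matrix n r R} {C : Matrix p n R} (M : Matrix r n R)
    (h : Function.Injective (fromBlocks (z • 1 - A) (-E) C 0).mulVec) {v : n → R}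
    (hv : (A - E * M) *ᵥ v = z • v) (hCv : C *ᵥ v = 0) : v = 0 := by
  have hker : fromBlocks (z • 1 - A) (-E) C 0 *ᵥ Sum.elim v (-(M *ᵥ v)) = 0 := by
    have htop : (z • 1 - A) *ᵥ v + -E *ᵥ -(M *ᵥ v) = 0 := by
      rw [sub_mulVec, smul_mulVec, one_mulVec, ← hv, sub_mulVec, neg_mulVec, mulVec_neg,
        neg_neg, mulVec_mulVec]
      abel
    rw [fromBlocks_mulVec, Sum.elim_comp_inl, Sum.elim_comp_inr, htop, hCv, zero_mulVec,
      add_zero]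
    exact Sum.elim_zero_zero
  have hv0 := h (hker.trans (mulVec_zero _).symm)
  exact funext fun i => congrFun hv0 (Sum.inl i)

variable {K L n p : Type*} [Field K] [Field L] [Algebra K L] [Fintype n] [DecidableEq n]

theorem eq_bot_of_le_ker_of_map_eq [IsAlgClosed L] (F : Matrix n n K) (C : Matrix p n K)
    (hF : ∀ z : L, z ≠ 0 → ∀ v : n → L,
      F.map (algebraMap K L) *ᵥ v = z • v → C.map (algebraMap K L) *ᵥ v = 0 → v = 0)
    (W : Submodule K (n → K)) (hWC : W ≤ LinearMap.ker C.toLin') (hWF : W.map F.toLin' = W) :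
    W = ⊥ := by
  by_contra hW
  set f := (F.map (algebraMap K L)).toLin'
  set Wc := Submodule.span L ((fun x : n → K => algebraMap K L ∘ x) '' W) with hWc_def
  have hWc : Wc.map f = Wc := by
    rw [hWc_def, Submodule.map_span, Set.image_image]
    conv_rhs => rw [← hWF, Submodule.map_coe, Set.image_image]
    simp only [f, toLin'_apply, map_mulVec_comp]
  have hWcC : Wc ≤ LinearMap.ker (C.map (algebraMap K L)).toLin' := by
    rw [Submodule.span_le]
    rintro _ ⟨x, hx, rfl⟩
    have hCx : C *ᵥ x = 0 := hWC hx
    simp [map_mulVec_comp, hCx]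
  have hmaps : Set.MapsTo f Wc Wc := fun x hx => hWc ▸ Submodule.mem_map_of_mem hx
  have hinj : Function.Injective (f.restrict hmaps) := by
    refine LinearMap.injective_iff_surjective.2 fun ⟨y, hy⟩ => ?_
    obtain ⟨x, hx, rfl⟩ : y ∈ Wc.map f := by rwa [hWc]
    exact ⟨⟨x, hx⟩, rfl⟩
  have : Nontrivial Wc := by
    obtain ⟨x, hx, hx0⟩ := Submodule.exists_mem_ne_zero_of_ne_bot hW
    refine Submodule.nontrivial_iff_ne_bot.2 fun hbot => hx0 ?_
    have : algebraMap K L ∘ x ∈ Wc := Submodule.subset_span ⟨x, hx, rfl⟩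
    rw [hbot, Submodule.mem_bot] at this
    exact funext fun i => (algebraMap K L).injective (by simpa using congrFun this i)
  obtain ⟨μ, hμ⟩ := Module.End.exists_eigenvalue (f.restrict hmaps)
  obtain ⟨⟨v, hv⟩, hvμ⟩ := hμ.exists_hasEigenvector
  have hμ0 : μ ≠ 0 := by
    rintro rfl
    exact hvμ.2 (hinj (by rw [hvμ.apply_eq_smul, zero_smul, map_zero]))
  have hvμ' : F.map (algebraMap K L) *ᵥ v = μ • v := congrArg Subtype.val hvμ.apply_eq_smul
  exact hvμ.2 (Subtype.ext (hF μ hμ0 v hvμ' (hWcC hv)))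

theorem exists_isNilpotent_sub_mul_of_hautus [IsAlgClosed L] [Fintype p] [DecidableEq p]
    (F : Matrix n n K) (C : Matrix p n K)
    (hF : ∀ z : L, z ≠ 0 → ∀ v : n → L,
      F.map (algebraMap K L) *ᵥ v = z • v → C.map (algebraMap K L) *ᵥ v = 0 → v = 0) :
    ∃ G : Matrix n p K, IsNilpotent (F - G * C) := by
  obtain ⟨G, hG⟩ := LinearMap.exists_isNilpotent_sub_comp F.toLin' C.toLin'
    (eq_bot_of_le_ker_of_map_eq F C hF)
  refine ⟨G.toMatrix', ?_⟩
  rwa [← isNilpotent_toLin'_iff, map_sub, toLin'_mul, toLin'_toMatrix']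

end Matrix

theorem stmt_10_general {n m p r N : ℕ}
    (A : Matrix (Fin n) (Fin n) ℝ) (B : Matrix (Fin n) (Fin m) ℝ)
    (C : Matrix (Fin p) (Fin n) ℝ) (E : Matrix (Fin n) (Fin r) ℝ)
    (U_p : Matrix (Fin m) (Fin N) ℝ) (D_p : Matrix (Fin r) (Fin N) ℝ)
    (X_p X_f : Matrix (Fin n) (Fin N) ℝ) (Y_f : Matrix (Fin p) (Fin N) ℝ)
    (hdata : X_f = A * X_p + B * U_p + E * D_p)
    (hYf : Y_f = C * X_f)
    (hstrong : ∀ z : ℂ, z ≠ 0 →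
      (Matrix.fromBlocks
          (z • (1 : Matrix (Fin n) (Fin n) ℂ) - A.map (algebraMap ℝ ℂ))
          (-(E.map (algebraMap ℝ ℂ)))
          (C.map (algebraMap ℝ ℂ)) 0).rank = n + r)
    (hCBCE : (Matrix.fromCols (C * B) (C * E)).rank = m + r) :
    ∃ (T₁ : Matrix (Fin n) (Fin m) ℝ) (T₃ : Matrix (Fin n) (Fin n) ℝ)
      (T₄ : Matrix (Fin n) (Fin p) ℝ),
        X_f = T₁ * U_p + T₃ * X_p + T₄ * Y_f ∧
        (∃ L : Matrix (Fin n) (Fin p) ℝ, IsNilpotent (T₃ - L * C)) ∧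
        (C * T₁).rank = m := by
  obtain ⟨W, hW⟩ := exists_mul_eq_one_of_rank_eq_card (A := fromCols (C * B) (C * E))
    (by simpa using hCBCE)
  rw [← fromRows_toRows W, fromRows_mul_fromCols, ← fromBlocks_one, fromBlocks_inj] at hW
  obtain ⟨hW₁B, -, hSB, hSE⟩ := hW
  set S := W.toRows₂
  refine ⟨B, A - E * (S * C * A), E * S, ?_, ?_, by simpa using rank_eq_card_of_mul_eq_one hW₁B⟩
  · have hSY : S * Y_f = S * C * A * X_p + D_p := by
      rw [hYf, hdata, Matrix.mul_add, Matrix.mul_add, Matrix.mul_add, Matrix.mul_add,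
        ← Matrix.mul_assoc C B, ← Matrix.mul_assoc S (C * B), hSB, ← Matrix.mul_assoc C E,
        ← Matrix.mul_assoc S (C * E), hSE]
      simp [Matrix.mul_assoc]
    rw [Matrix.mul_assoc E S, hSY, hdata]
    simp only [Matrix.mul_add, Matrix.sub_mul, Matrix.mul_assoc]
    abel
  · refine exists_isNilpotent_sub_mul_of_hautus (L := ℂ) _ C fun z hz v hv hCv => ?_
    refine eq_zero_of_mulVec_eq_smul_of_injective_fromBlocks ((S * C * A).map (algebraMap ℝ ℂ))
      (mulVec_injective_of_rank_eq_card (by simpa using hstrong z hz)) ?_ hCv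
    rwa [Matrix.map_sub _ (map_sub _), Matrix.map_mul] at hv

/-- Under the persistence-of-excitation assumption and the model-based solvability
conditions, there exist matrices T₁, T₃, T₄ with X_f = T₁U_p + T₃X_p + T₄Y_f,
(T₃, C) reconstructable and C·T₁ of full column rank. -/
theorem stmt_10 {n m p r N : ℕ}
    (A : Matrix (Fin n) (Fin n) ℝ) (B : Matrix (Fin n) (Fin m) ℝ)
    (C : Matrix (Fin p) (Fin n) ℝ) (E : Matrix (Fin n) (Fin r) ℝ)
    (U_p : Matrix (Fin m) (Fin N) ℝ) (D_p : Matrix (Fin r) (Fin N) ℝ)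
    (X_p X_f : Matrix (Fin n) (Fin N) ℝ) (Y_f : Matrix (Fin p) (Fin N) ℝ)
    (hdata : X_f = A * X_p + B * U_p + E * D_p)
    (hYf : Y_f = C * X_f)
    (hFRR : (Matrix.fromRows U_p (Matrix.fromRows D_p X_p)).rank = m + r + n)
    (hstrong : ∀ z : ℂ, z ≠ 0 →
      (Matrix.fromBlocks
          (z • (1 : Matrix (Fin n) (Fin n) ℂ) - A.map (algebraMap ℝ ℂ))
          (-(E.map (algebraMap ℝ ℂ)))
          (C.map (algebraMap ℝ ℂ)) 0).rank = n + r)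
    (hCBCE : (Matrix.fromCols (C * B) (C * E)).rank = m + r) :
    ∃ (T₁ : Matrix (Fin n) (Fin m) ℝ) (T₃ : Matrix (Fin n) (Fin n) ℝ)
      (T₄ : Matrix (Fin n) (Fin p) ℝ),
        X_f = T₁ * U_p + T₃ * X_p + T₄ * Y_f ∧
        (∃ L : Matrix (Fin n) (Fin p) ℝ, IsNilpotent (T₃ - L * C)) ∧
        (C * T₁).rank = m :=
  stmt_10_general A B C E U_p D_p X_p X_f Y_f hdata hYf hstrong hCBCE
end

section
/- Let A ∈ ℝ^{n×n}, B ∈ ℝ^{n×m}, C ∈ ℝ^{p×n}, E ∈ ℝ^{n×r}, and let U_p ∈ ℝ^{m×N}, D_p ∈ ℝ^{r×N}, X_p, X_f ∈ ℝ^{n×N}, Y_f ∈ ℝ^{p×N} satisfy X_f = A·X_p + B·U_p + E·D_p and Y_f = C·X_f, with the stacked (m+r+n)×N matrix [U_p; D_p; X_p] of full row rank m+r+n. Then a triple (T₁, T₃, T₄) ∈ ℝ^{n×m} × ℝ^{n×n} × ℝ^{n×p} satisfies X_f = T₁·U_p + T₃·X_p + T₄·Y_f if and only if T₄·C·E = E,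 T₁ = (I_n − T₄·C)·B, and T₃ = (I_n − T₄·C)·A. -/
/-!
Substituting `Y_f = C X_f` and `X_f = A X_p + B U_p + E D_p`, the residual
`X_f - (T₁ U_p + T₃ X_p + T₄ Y_f)` becomes `[(1 - T₄C)B - T₁ | (1 - T₄C)E | (1 - T₄C)A - T₃]`
times the stacked data matrix `[U_p; D_p; X_p]`. Full row rank makes the rows of that data matrix
linearly independent, so the residual vanishes iff each of the three coefficient blocks does.
-/

open Matrix

namespace Matrix

variable {l m n : Type*}

theorem linearIndependent_row_of_rank_eq_card {K : Type*} [Field K] [Fintype m] [Fintype n]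
    {S : Matrix m n K} (h : S.rank = Fintype.card m) : LinearIndependent K S.row := by
  rw [linearIndependent_iff_card_eq_finrank_span, Set.finrank, ← rank_eq_finrank_span_row, h]

theorem mul_eq_zero_iff_of_linearIndependent_row {R : Type*} [Semiring R] [Fintype m]
    {S : Matrix m n R} (hS : LinearIndependent R S.row) {M : Matrix l m R} :
    M * S = 0 ↔ M = 0 := by
  refine ⟨fun h => ?_, fun h => h ▸ Matrix.zero_mul S⟩
  funext i
  exact vecMul_injective_iff.mpr hS ((congrFun h i).trans (zero_vecMul S).symm)

end Matrix

section DataEquation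

variable {R : Type*} [Ring R] {x u d y k : Type*}
  [Fintype x] [DecidableEq x] [Fintype u] [Fintype d] [Fintype y]

theorem data_residual_eq_fromCols_mul_fromRows
    {A : Matrix x x R} {B : Matrix x u R} {C : Matrix y x R} {E : Matrix x d R}
    {U_p : Matrix u k R} {D_p : Matrix d k R} {X_p X_f : Matrix x k R} {Y_f : Matrix y k R}
    (hdata : X_f = A * X_p + B * U_p + E * D_p) (hYf : Y_f = C * X_f)
    (T₁ : Matrix x u R) (T₃ : Matrix x x R) (T₄ : Matrix x y R) :
    X_f - (T₁ * U_p + T₃ * X_p + T₄ * Y_f) =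
      fromCols ((1 - T₄ * C) * B - T₁) (fromCols ((1 - T₄ * C) * E) ((1 - T₄ * C) * A - T₃)) *
        fromRows U_p (fromRows D_p X_p) := by
  have hXf_sub : X_f - T₄ * Y_f = (1 - T₄ * C) * (A * X_p + B * U_p + E * D_p) := by
    rw [hYf, ← hdata, Matrix.sub_mul, Matrix.one_mul, Matrix.mul_assoc]
  calc X_f - (T₁ * U_p + T₃ * X_p + T₄ * Y_f)
        = X_f - T₄ * Y_f - T₁ * U_p - T₃ * X_p := by abel
    _ = _ := by
      rw [hXf_sub, fromCols_mul_fromRows, fromCols_mul_fromRows]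
      simp only [Matrix.mul_add, Matrix.sub_mul, Matrix.mul_assoc]
      abel

end DataEquation

/-- Characterization of all solutions (T₁, T₃, T₄) of the data equation
X_f = T₁U_p + T₃X_p + T₄Y_f. -/
theorem stmt_12 {n m p r N : ℕ}
    (A : Matrix (Fin n) (Fin n) ℝ) (B : Matrix (Fin n) (Fin m) ℝ)
    (C : Matrix (Fin p) (Fin n) ℝ) (E : Matrix (Fin n) (Fin r) ℝ)
    (U_p : Matrix (Fin m) (Fin N) ℝ) (D_p : Matrix (Fin r) (Fin N) ℝ)
    (X_p X_f : Matrix (Fin n) (Fin N) ℝ) (Y_f : Matrix (Fin p) (Fin N) ℝ)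
    (hdata : X_f = A * X_p + B * U_p + E * D_p)
    (hYf : Y_f = C * X_f)
    (hFRR : (Matrix.fromRows U_p (Matrix.fromRows D_p X_p)).rank = m + r + n)
    (T₁ : Matrix (Fin n) (Fin m) ℝ) (T₃ : Matrix (Fin n) (Fin n) ℝ)
    (T₄ : Matrix (Fin n) (Fin p) ℝ) :
    X_f = T₁ * U_p + T₃ * X_p + T₄ * Y_f ↔
      (T₄ * C * E = E ∧ T₁ = (1 - T₄ * C) * B ∧ T₃ = (1 - T₄ * C) * A) := by
  have hS : LinearIndependent ℝ (fromRows U_p (fromRows D_p X_p)).row :=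
    linearIndependent_row_of_rank_eq_card (by simp [hFRR, add_assoc])
  have hE : (1 - T₄ * C) * E = 0 ↔ T₄ * C * E = E := by
    rw [Matrix.sub_mul, Matrix.one_mul, sub_eq_zero, eq_comm]
  rw [← sub_eq_zero, data_residual_eq_fromCols_mul_fromRows hdata hYf,
    mul_eq_zero_iff_of_linearIndependent_row hS, ← fromCols_zero, fromCols_ext_iff,
    ← fromCols_zero, fromCols_ext_iff, sub_eq_zero, sub_eq_zero, hE, and_left_comm]
  exact and_congr_right' (and_congr eq_comm eq_comm)
end

section
/- Let A ∈ ℝ^{n×n}, C ∈ ℝ^{p×n}, E ∈ ℝ^{n×r} with rank(E) = r. Suppose there exist matrices T₂, T₄ ∈ ℝ^{n×p} such that T₄·C·E = E and the matrix (I_n − T₄·C)·A − T₂·C is nilpotent. Then for every nonzero z ∈ ℂ the complex (n+p)×(n+r) block matrix [[z·I_n − A, −E],[C, 0]] has rank n + r. -/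
/-!
If `(x, u)` lies in the kernel of the block matrix, then `A x = z x - E u` and `C x = 0`; the
condition `T₄ C E = E` makes `x` an eigenvector, with eigenvalue `z ≠ 0`, of the nilpotent
observer error matrix `(I - T₄ C) A - T₂ C`, so `x = 0`. Then `E u = 0`, and `u = 0` because
`E` has a real left inverse, which stays a left inverse over `ℂ`. So the block matrix has
trivial kernel, i.e. full column rank `n + r`.
-/

open Matrix

namespace Matrix

variable {K : Type*} [Field K] {m n : Type*} [Fintype n]

theorem rank_eq_card_width_iff_mulVec_injective (A : Matrix m n K) :
    A.rank = Fintype.card n ↔ Function.Injective A.mulVec := by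
  rw [mulVec_injective_iff, linearIndependent_iff_card_eq_finrank_span, rank_eq_finrank_span_cols,
    Set.finrank, eq_comm]

theorem exists_mul_eq_one_of_mulVec_injective [Fintype m] [DecidableEq n] {A : Matrix m n K}
    (hA : Function.Injective A.mulVec) : ∃ B : Matrix n m K, B * A = 1 := by
  classical
  obtain ⟨g, hg⟩ := A.mulVecLin.exists_leftInverse_of_injective (LinearMap.ker_eq_bot.mpr hA)
  refine ⟨LinearMap.toMatrix' g, ?_⟩
  rw [← LinearMap.toMatrix'_toLin' A, ← LinearMap.toMatrix'_comp, toLin'_apply', hg,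
    LinearMap.toMatrix'_id]

theorem mulVec_injective_map_of_rank_eq_card_width [Fintype m] [DecidableEq n]
    {S : Type*} [CommRing S] (f : K →+* S) {A : Matrix m n K} (hA : A.rank = Fintype.card n) :
    Function.Injective (A.map f).mulVec := by
  obtain ⟨B, hB⟩ := exists_mul_eq_one_of_mulVec_injective
    ((rank_eq_card_width_iff_mulVec_injective A).mp hA)
  have hB' : B.map f * A.map f = 1 := by
    rw [← Matrix.map_mul, hB, Matrix.map_one _ f.map_zero f.map_one]
  intro u v huv
  simpa [mulVec_mulVec, hB'] using congrArg (B.map f).mulVec huv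

theorem eq_zero_of_mulVec_eq_smul_of_isNilpotent {R : Type*} [CommRing R] [IsDomain R]
    [DecidableEq n] {N : Matrix n n R} (hN : IsNilpotent N) {z : R} (hz : z ≠ 0) {x : n → R}
    (hx : N *ᵥ x = z • x) : x = 0 := by
  by_contra hx0
  have hz' : Module.End.HasEigenvalue (toLin' N) z :=
    Module.End.hasEigenvalue_of_hasEigenvector ⟨Module.End.mem_eigenspace_iff.mpr hx, hx0⟩
  exact hz (hz'.isNilpotent_of_isNilpotent (hN.map toLinAlgEquiv')).eq_zero

variable {R : Type*} [CommRing R] {p r : Type*} [Fintype p] [Fintype r]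

def errorDynamics [DecidableEq n] (A : Matrix n n R) (C : Matrix p n R) (T₂ T₄ : Matrix n p R) :
    Matrix n n R :=
  (1 - T₄ * C) * A - T₂ * C

theorem errorDynamics_mulVec_eq_smul [DecidableEq n] {A : Matrix n n R} {C : Matrix p n R}
    {E : Matrix n r R} {T₂ T₄ : Matrix n p R} (hTE : T₄ * C * E = E) {z : R} {x : n → R}
    {u : r → R} (hAx : A *ᵥ x = z • x - E *ᵥ u) (hCx : C *ᵥ x = 0) :
    errorDynamics A C T₂ T₄ *ᵥ x = z • x := by
  have hT₄ : T₄ *ᵥ (C *ᵥ (E *ᵥ u)) = E *ᵥ u := by rw [mulVec_mulVec, mulVec_mulVec, hTE]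
  rw [errorDynamics, sub_mulVec, sub_mul, one_mul, sub_mulVec, ← mulVec_mulVec, ← mulVec_mulVec,
    ← mulVec_mulVec, hAx, hCx, mulVec_sub, mulVec_sub, mulVec_smul, hCx, hT₄]
  simp

theorem errorDynamics_map [DecidableEq n] {S : Type*} [CommRing S] (f : R →+* S)
    (A : Matrix n n R) (C : Matrix p n R) (T₂ T₄ : Matrix n p R) :
    errorDynamics (A.map f) (C.map f) (T₂.map f) (T₄.map f) =
      (errorDynamics A C T₂ T₄).map f := by
  simp [errorDynamics, Matrix.map_sub, Matrix.map_mul, Matrix.map_one]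

theorem rank_fromBlocks_eq_of_isNilpotent_errorDynamics [DecidableEq n]
    {A : Matrix n n K} {C : Matrix p n K} {E : Matrix n r K} {T₂ T₄ : Matrix n p K}
    (hE : Function.Injective E.mulVec) (hTE : T₄ * C * E = E)
    (hN : IsNilpotent (errorDynamics A C T₂ T₄)) {z : K} (hz : z ≠ 0) :
    (fromBlocks (z • 1 - A) (-E) C 0).rank = Fintype.card n + Fintype.card r := by
  rw [← Fintype.card_sum, rank_eq_card_width_iff_mulVec_injective,
    ← coe_mulVecLin, injective_iff_map_eq_zero]
  intro v hv
  obtain ⟨x, u, rfl⟩ : ∃ x u, v = Sum.elim x u := ⟨_, _, (Sum.elim_comp_inl_inr v).symm⟩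
  rw [coe_mulVecLin, fromBlocks_mulVec] at hv
  have hAx : (z • 1 - A) *ᵥ x + -E *ᵥ u = 0 := funext fun i => congrFun hv (Sum.inl i)
  have hCx : C *ᵥ x = 0 := funext fun i => by simpa using congrFun hv (Sum.inr i)
  rw [sub_mulVec, smul_mulVec, one_mulVec, neg_mulVec, ← sub_eq_add_neg, sub_eq_zero] at hAx
  have hx : x = 0 := eq_zero_of_mulVec_eq_smul_of_isNilpotent hN hz
    (errorDynamics_mulVec_eq_smul hTE (by rw [← hAx]; abel) hCx)
  have hu : u = 0 := hE (by simpa [hx] using hAx.symm)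
  rw [hx, hu, Sum.elim_zero_zero]

end Matrix

/-- If T₄·C·E = E and (I − T₄·C)·A − T₂·C is nilpotent, then the strong*
reconstructability rank condition holds for (A, E, C). -/
theorem stmt_14 {n p r : ℕ}
    (A : Matrix (Fin n) (Fin n) ℝ) (C : Matrix (Fin p) (Fin n) ℝ)
    (E : Matrix (Fin n) (Fin r) ℝ) (hE : E.rank = r)
    (T₂ T₄ : Matrix (Fin n) (Fin p) ℝ)
    (h1 : T₄ * C * E = E)
    (h2 : IsNilpotent ((1 - T₄ * C) * A - T₂ * C)) :
    ∀ z : ℂ, z ≠ 0 →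
      (Matrix.fromBlocks
          (z • (1 : Matrix (Fin n) (Fin n) ℂ) - A.map (algebraMap ℝ ℂ))
          (-(E.map (algebraMap ℝ ℂ)))
          (C.map (algebraMap ℝ ℂ)) 0).rank = n + r := by
  intro z hz
  set f := algebraMap ℝ ℂ
  have hE' : Function.Injective (E.map f).mulVec :=
    mulVec_injective_map_of_rank_eq_card_width f (by rw [hE, Fintype.card_fin])
  have hTE' : T₄.map f * C.map f * E.map f = E.map f := by
    rw [← Matrix.map_mul, ← Matrix.map_mul, h1]
  have hN' : IsNilpotent (errorDynamics (A.map f) (C.map f) (T₂.map f) (T₄.map f)) := by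
    rw [errorDynamics_map]
    exact h2.map f.mapMatrix
  simpa using rank_fromBlocks_eq_of_isNilpotent_errorDynamics hE' hTE' hN' hz
end

section
/- Let A ∈ ℝ^{n×p}, B ∈ ℝ^{p×n}, C ∈ ℝ^{n×r} be such that rank(C) = r, (I_n − A·B)·C = 0, and either rank(A) = r or rank(B) = r. Then rank(I_n − A·B) = n − r, and the column space of C equals the kernel of I_n − A·B (i.e., the range of the linear map x ↦ C·x equals the null space of the linear map x ↦ (I_n − A·B)·x). -/
open Matrix

/-- If rank(C) = r, (I − AB)C = 0 and rank(A) = r or rank(B) = r, then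
rank(I − AB) = n − r and the column space of C equals the kernel of I − AB. -/
theorem stmt_15 {n p r : ℕ}
    (A : Matrix (Fin n) (Fin p) ℝ) (B : Matrix (Fin p) (Fin n) ℝ)
    (C : Matrix (Fin n) (Fin r) ℝ)
    (hC : C.rank = r)
    (h : (1 - A * B) * C = 0)
    (hr : A.rank = r ∨ B.rank = r) :
    (1 - A * B).rank = n - r ∧
      LinearMap.range C.mulVecLin = LinearMap.ker (1 - A * B).mulVecLin := by
  set M : Matrix (Fin n) (Fin n) ℝ := 1 - A * B with hM
  have hone : (1 : Matrix (Fin n) (Fin n) ℝ) = M + A * B := by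
    rw [hM, sub_add_cancel]
  have hsub : LinearMap.range C.mulVecLin ≤ LinearMap.ker M.mulVecLin := by
    rintro x ⟨y, rfl⟩
    have := congrArg (fun N => Matrix.mulVec N y) h
    simpa [Matrix.mulVec_mulVec] using this
  have hrn := LinearMap.finrank_range_add_finrank_ker M.mulVecLin
  have hdim : Module.finrank ℝ (Fin n → ℝ) = n := by simp
  rw [hdim] at hrn
  have hker_ge : r ≤ Module.finrank ℝ (LinearMap.ker M.mulVecLin) := by
    have := Submodule.finrank_mono hsub
    rwa [show Module.finrank ℝ (LinearMap.range C.mulVecLin) = r from hC] at this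
  have hAB : (A * B).rank ≤ r := by
    rcases hr with hr | hr
    · simpa [hr] using Matrix.rank_mul_le_left A B
    · simpa [hr] using Matrix.rank_mul_le_right A B
  have hsum : n ≤ Module.finrank ℝ ↥(LinearMap.range M.mulVecLin)
      + Module.finrank ℝ ↥(LinearMap.range (A * B).mulVecLin) := by
    have hrange : LinearMap.range (1 : Matrix (Fin n) (Fin n) ℝ).mulVecLin ≤
        LinearMap.range M.mulVecLin ⊔ LinearMap.range (A * B).mulVecLin := by
      rintro x ⟨y, rfl⟩
      have hy : (1 : Matrix (Fin n) (Fin n) ℝ).mulVecLin y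
          = M.mulVecLin y + (A * B).mulVecLin y := by
        simp only [Matrix.mulVecLin_apply, hone, Matrix.add_mulVec]
      rw [hy]
      exact Submodule.add_mem_sup (LinearMap.mem_range_self _ y) (LinearMap.mem_range_self _ y)
    have h1 : Module.finrank ℝ (LinearMap.range (1 : Matrix (Fin n) (Fin n) ℝ).mulVecLin) = n := by
      have : (1 : Matrix (Fin n) (Fin n) ℝ).rank = n := by simp
      simpa [Matrix.rank] using this
    calc n = Module.finrank ℝ (LinearMap.range (1 : Matrix (Fin n) (Fin n) ℝ).mulVecLin) :=
            h1.symm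
      _ ≤ Module.finrank ℝ ↥(LinearMap.range M.mulVecLin
            ⊔ LinearMap.range (A * B).mulVecLin) := Submodule.finrank_mono hrange
      _ ≤ _ := Submodule.finrank_add_le_finrank_add_finrank _ _
  have erank : M.rank = Module.finrank ℝ (LinearMap.range M.mulVecLin) := rfl
  have eAB : (A * B).rank = Module.finrank ℝ (LinearMap.range (A * B).mulVecLin) := rfl
  have hrank : M.rank = n - r := by omega
  refine ⟨hrank, ?_⟩
  apply Submodule.eq_of_le_of_finrank_eq hsub
  have hker : Module.finrank ℝ (LinearMap.ker M.mulVecLin) = r := by omega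
  rw [hker]
  exact hC
end

section
/- Let A ∈ ℝ^{n×p}, B ∈ ℝ^{p×n}, C ∈ ℝ^{n×r} be such that rank(C) = r, (I_n − A·B)·C = 0, and either rank(A) = r or rank(B) = r. Let D ∈ ℝ^{n×m} be such that the n×(r+m) block matrix [C D] has rank r + m. Then rank((I_n − A·B)·D) = m. -/
/-!
Since rank(AB) ≤ r, subadditivity of rank applied to I = (I - AB) + AB gives
rank(I - AB) ≥ n - r. Sylvester's inequality for (I - AB)·[C  D] then gives
rank((I - AB)·[C  D]) ≥ (n - r) + (r + m) - n = m, and because (I - AB)C = 0 the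
columns of that product are zero or columns of (I - AB)D.
-/

open Matrix Module

theorem LinearMap.finrank_range_add_finrank_range_le {K U V W : Type*} [Field K]
    [AddCommGroup U] [Module K U] [AddCommGroup V] [Module K V] [AddCommGroup W] [Module K W]
    [FiniteDimensional K U] [FiniteDimensional K V] (f : V →ₗ[K] W) (g : U →ₗ[K] V) :
    finrank K (range f) + finrank K (range g) ≤ finrank K V + finrank K (range (f ∘ₗ g)) := by
  have hker : finrank K (ker (f.domRestrict (range g))) ≤ finrank K (ker f) :=
    LinearMap.finrank_le_finrank_of_injective (f := (range g).subtype.restrict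
      (p := ker (f.domRestrict (range g))) (q := ker f) fun x hx => hx)
      fun x y hxy => Subtype.ext (Subtype.ext (congrArg Subtype.val hxy :))
  have hg := (f.domRestrict (range g)).finrank_range_add_finrank_ker
  rw [range_domRestrict, ← range_comp] at hg
  have hf := f.finrank_range_add_finrank_ker
  omega

namespace Matrix

variable {K l m n : Type*} [Field K] [Fintype m] [Fintype n]

theorem rank_add_le (A B : Matrix l m K) : (A + B).rank ≤ A.rank + B.rank := by
  rw [rank, rank, rank, mulVecLin_add]
  refine (Submodule.finrank_mono ?_).trans (Submodule.finrank_add_le_finrank_add_finrank _ _)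
  rintro _ ⟨x, rfl⟩
  exact Submodule.add_mem_sup ⟨x, rfl⟩ ⟨x, rfl⟩

theorem rank_add_rank_le_card_add_rank_mul (A : Matrix l m K) (B : Matrix m n K) :
    A.rank + B.rank ≤ Fintype.card m + (A * B).rank := by
  rw [rank, rank, rank, mulVecLin_mul, ← finrank_fintype_fun_eq_card K]
  exact LinearMap.finrank_range_add_finrank_range_le _ _

theorem rank_mul_fromCols_le_of_mul_eq_zero {r : Type*} [Fintype r] [DecidableEq n]
    {P : Matrix l m K} {C : Matrix m r K} (D : Matrix m n K) (hPC : P * C = 0) :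
    (P * fromCols C D).rank ≤ (P * D).rank := by
  have : P * fromCols C D = P * D * fromCols (0 : Matrix n r K) 1 := by
    rw [mul_fromCols, mul_fromCols, hPC, Matrix.mul_zero, Matrix.mul_one]
  exact this ▸ rank_mul_le_left _ _

end Matrix

theorem stmt_16_general {n p r m : ℕ}
    (A : Matrix (Fin n) (Fin p) ℝ) (B : Matrix (Fin p) (Fin n) ℝ)
    (C : Matrix (Fin n) (Fin r) ℝ)
    (h : (1 - A * B) * C = 0)
    (hr : A.rank = r ∨ B.rank = r)
    (D : Matrix (Fin n) (Fin m) ℝ)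
    (hCD : (Matrix.fromCols C D).rank = r + m) :
    ((1 - A * B) * D).rank = m := by
  have hAB : (A * B).rank ≤ r := by
    rcases hr with hA | hB
    · exact hA ▸ rank_mul_le_left A B
    · exact hB ▸ rank_mul_le_right A B
  have hP : n ≤ (1 - A * B).rank + r := by
    have hsum := rank_add_le (1 - A * B) (A * B)
    rw [sub_add_cancel, rank_one, Fintype.card_fin] at hsum
    omega
  have hSylvester := rank_add_rank_le_card_add_rank_mul (1 - A * B) (fromCols C D)
  have hCols := rank_mul_fromCols_le_of_mul_eq_zero D h
  rw [hCD, Fintype.card_fin] at hSylvester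
  have hPD := rank_le_width ((1 - A * B) * D)
  omega

/-- If in addition [C  D] has rank r + m, then rank((I − AB)D) = m. -/
theorem stmt_16 {n p r m : ℕ}
    (A : Matrix (Fin n) (Fin p) ℝ) (B : Matrix (Fin p) (Fin n) ℝ)
    (C : Matrix (Fin n) (Fin r) ℝ)
    (hC : C.rank = r)
    (h : (1 - A * B) * C = 0)
    (hr : A.rank = r ∨ B.rank = r)
    (D : Matrix (Fin n) (Fin m) ℝ)
    (hCD : (Matrix.fromCols C D).rank = r + m) :
    ((1 - A * B) * D).rank = m :=
  stmt_16_general A B C h hr D hCD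
end
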